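/- Let B be a topological abelian group in which every neighbourhood of 0 contains an open subgroup, and let A ⊆ B be a subgroup that is discrete in the subspace topology. Then every group homomorphism f : A → ℚ/ℤ extends to a continuous group homomorphism g : B → ℚ/ℤ, i.e., there exists a continuous homomorphism g : B → ℚ/ℤ with g(a) = f(a) for all a ∈ A. -/

import Mathlib

/-!
A discrete subgroup `A` meets some open subgroup `U` of `B` trivially, so `A` embeds into the
discrete group `B ⧸ U`. Since `ℚ/ℤ` is divisible, it is an injective `ℤ`-module (Baer), so `f`
extends along this embedding to `B ⧸ U`; composed with the quotient map, the extension is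
continuous because `B ⧸ U` is discrete.
-/

open Topology

/-- The group `ℚ/ℤ` (the quotient of `ℚ` by `ℤ`), equipped with the discrete topology. -/
def QZ : Type := ℚ ⧸ AddSubgroup.zmultiples (1 : ℚ)

noncomputable instance : AddCommGroup QZ :=
  inferInstanceAs (AddCommGroup (ℚ ⧸ AddSubgroup.zmultiples (1 : ℚ)))

instance : TopologicalSpace QZ := ⊥

instance : DiscreteTopology QZ := ⟨rfl⟩

instance : IsTopologicalAddGroup QZ where
  continuous_add := continuous_of_discreteTopology
  continuous_neg := continuous_of_discreteTopology

noncomputable instance : DivisibleBy QZ ℤ :=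
  inferInstanceAs (DivisibleBy (ℚ ⧸ AddSubgroup.zmultiples (1 : ℚ)) ℤ)

theorem AddSubgroup.exists_isOpen_disjoint_of_discreteTopology {B : Type*} [AddGroup B]
    [TopologicalSpace B]
    (hB : ∀ V ∈ 𝓝 (0 : B), ∃ U : AddSubgroup B, IsOpen (U : Set B) ∧ (U : Set B) ⊆ V)
    (A : AddSubgroup B) [DiscreteTopology A] :
    ∃ U : AddSubgroup B, IsOpen (U : Set B) ∧ Disjoint A U := by
  obtain ⟨V, hV, hVA⟩ := (mem_nhds_subtype (A : Set B) 0 {0}).mp (mem_nhds_discrete.mpr rfl)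
  obtain ⟨U, hU, hUV⟩ := hB V hV
  refine ⟨U, hU, AddSubgroup.disjoint_def.mpr fun {x} hxA hxU => ?_⟩
  exact congrArg Subtype.val (hVA (hUV hxU) : (⟨x, hxA⟩ : A) ∈ ({0} : Set A))

theorem QuotientAddGroup.injective_mk'_comp_subtype_of_disjoint {B : Type*} [AddCommGroup B]
    {A U : AddSubgroup B} (hAU : Disjoint A U) :
    Function.Injective ((QuotientAddGroup.mk' U).comp A.subtype) := by
  refine (injective_iff_map_eq_zero _).mpr fun a ha => ?_
  have haU : (a : B) ∈ U := (QuotientAddGroup.eq_zero_iff _).mp ha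
  exact Subtype.ext (AddSubgroup.disjoint_def.mp hAU a.2 haU)

/-- In a topological abelian group in which every neighbourhood of `0` contains an
open subgroup, every homomorphism from a discrete subgroup `A` to `ℚ/ℤ` extends to a
continuous homomorphism on all of `B`. -/
theorem extend_hom_of_discrete_subgroup
    {B : Type*} [AddCommGroup B] [TopologicalSpace B] [IsTopologicalAddGroup B]
    (hB : ∀ V ∈ nhds (0 : B), ∃ U : AddSubgroup B, IsOpen (U : Set B) ∧ (U : Set B) ⊆ V)
    (A : AddSubgroup B) (hA : DiscreteTopology A)
    (f : A →+ QZ) :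
    ∃ g : B →+ QZ, Continuous g ∧ ∀ a : A, g a = f a := by
  obtain ⟨U, hU, hAU⟩ := A.exists_isOpen_disjoint_of_discreteTopology hB
  obtain ⟨g, hg⟩ := (Module.Baer.of_divisible QZ).extension_property_addMonoidHom _
    (QuotientAddGroup.injective_mk'_comp_subtype_of_disjoint hAU) f
  have : DiscreteTopology (B ⧸ U) := QuotientAddGroup.discreteTopology hU
  exact ⟨g.comp (QuotientAddGroup.mk' U),
    (continuous_of_discreteTopology (f := ⇑g)).comp QuotientAddGroup.continuous_mk,
    fun a => DFunLike.congr_fun hg a⟩
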